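/- arXiv:2509.16689 — 2 statements merged into one kernel-verified Lean document; each statement's English description precedes it below -/
import Mathlib

section
/- Entanglement swapping of Bell-diagonal states: if ρ₁ = ∑ λ_ij |Ψ_ij⟩⟨Ψ_ij| and ρ₂ = ∑ μ_kl |Ψ_kl⟩⟨Ψ_kl| are Bell-diagonal two-qubit states (on registers B₁A₁ and A₂B₂), then for each Bell-state-measurement outcome (m,n) on registers A₁A₂ the outcome probability is exactly 1/4, and the corrected post-measurement state on B₁B₂ is Bell-diagonal with coefficients λ'_{ab} = ∑_{i⊕k=a, j⊕l=b} λ_ij μ_kl (indices mod 2), independently of (m,n). -/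
open Matrix Kronecker BigOperators ComplexOrder

noncomputable section

/-- Pauli X matrix. -/
def PX : Matrix (Fin 2) (Fin 2) ℂ := !![0, 1; 1, 0]

/-- Pauli Y matrix. -/
def PY : Matrix (Fin 2) (Fin 2) ℂ := !![0, -Complex.I; Complex.I, 0]

/-- Pauli Z matrix. -/
def PZ : Matrix (Fin 2) (Fin 2) ℂ := !![1, 0; 0, -1]

/-- The maximally entangled two-qubit state (|00⟩+|11⟩)/√2, as a vector. -/
def bell00 : Fin 2 × Fin 2 → ℂ := fun p => if p.1 = p.2 then ((1 / Real.sqrt 2 : ℝ) : ℂ) else 0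

/-- The Bell basis vector |Ψ_ij⟩ = (I ⊗ X^i Z^j)|Ψ₀₀⟩. -/
def bell (i j : Fin 2) : Fin 2 × Fin 2 → ℂ :=
  (((1 : Matrix (Fin 2) (Fin 2) ℂ) ⊗ₖ (PX ^ (i : ℕ) * PZ ^ (j : ℕ)))).mulVec bell00

/-- The inner product ⟨φ|M|ψ⟩. -/
def braket2 {n : Type*} [Fintype n] (φ : n → ℂ) (M : Matrix n n ℂ) (ψ : n → ℂ) : ℂ :=
  star φ ⬝ᵥ M.mulVec ψ

/-- A density matrix: positive semidefinite with unit trace. -/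
def IsDensity {n : Type*} [Fintype n] (ρ : Matrix n n ℂ) : Prop :=
  ρ.PosSemidef ∧ ρ.trace = 1

/-- The Bell-diagonal twirl B(ρ). -/
def twirl (ρ : Matrix (Fin 2 × Fin 2) (Fin 2 × Fin 2) ℂ) :
    Matrix (Fin 2 × Fin 2) (Fin 2 × Fin 2) ℂ :=
  (1 / 4 : ℂ) • (ρ + (PX ⊗ₖ PX) * ρ * (PX ⊗ₖ PX)ᴴ + (PY ⊗ₖ PY) * ρ * (PY ⊗ₖ PY)ᴴ
    + (PZ ⊗ₖ PZ) * ρ * (PZ ⊗ₖ PZ)ᴴ)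

/-- The Bell projector |Ψ_ij⟩⟨Ψ_ij|. -/
def bproj (i j : Fin 2) : Matrix (Fin 2 × Fin 2) (Fin 2 × Fin 2) ℂ :=
  vecMulVec (bell i j) (star (bell i j))

/-- Partial inner product ⟨ψ|_{A₁A₂} M |ψ⟩_{A₁A₂} of a vector ψ on the middle registers
A₁,A₂ with an operator M on registers (B₁,A₁),(A₂,B₂), giving a matrix on B₁,B₂. -/
def swapProj (ψ : Fin 2 × Fin 2 → ℂ)
    (M : Matrix ((Fin 2 × Fin 2) × (Fin 2 × Fin 2)) ((Fin 2 × Fin 2) × (Fin 2 × Fin 2)) ℂ) :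
    Matrix (Fin 2 × Fin 2) (Fin 2 × Fin 2) ℂ :=
  fun p q => ∑ a₁, ∑ a₂, ∑ a₁', ∑ a₂',
    star (ψ (a₁, a₂)) * M ((p.1, a₁), (a₂, p.2)) ((q.1, a₁'), (a₂', q.2)) * ψ (a₁', a₂')

/-- The probability of Bell-measurement outcome ij on the middle registers:
p'_ij(M) = Tr[|Ψ_ij⟩⟨Ψ_ij|_{A₁A₂} M]. -/
def swapProb (i j : Fin 2)
    (M : Matrix ((Fin 2 × Fin 2) × (Fin 2 × Fin 2)) ((Fin 2 × Fin 2) × (Fin 2 × Fin 2)) ℂ) : ℂ :=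
  (swapProj (bell i j) M).trace

/-- Tr[|Ψ_ij⟩⟨Ψ_ij|_{B₁B₂} |Ψ_ij⟩⟨Ψ_ij|_{A₁A₂} M]. -/
def swapNum (i j : Fin 2)
    (M : Matrix ((Fin 2 × Fin 2) × (Fin 2 × Fin 2)) ((Fin 2 × Fin 2) × (Fin 2 × Fin 2)) ℂ) : ℂ :=
  braket2 (bell i j) (swapProj (bell i j) M) (bell i j)

/-- The postselected end-to-end fidelity F'_ij. -/
def swapFid (i j : Fin 2)
    (M : Matrix ((Fin 2 × Fin 2) × (Fin 2 × Fin 2)) ((Fin 2 × Fin 2) × (Fin 2 × Fin 2)) ℂ) : ℂ :=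
  swapNum i j M / swapProb i j M

/-! ### Auxiliary lemmas -/

/-- The scalar 1/√2 as a complex number. -/
def cc : ℂ := ((1 / Real.sqrt 2 : ℝ) : ℂ)

lemma cc_real : (starRingEnd ℂ) cc = cc := by simp [cc]

lemma cc_sq : cc ^ 2 = 1 / 2 := by
  have h : (Real.sqrt 2) ^ 2 = 2 := Real.sq_sqrt (by norm_num)
  simp only [cc]
  rw [← Complex.ofReal_pow]
  norm_num [h]

lemma bell_apply (i j : Fin 2) (a b : Fin 2) :
    bell i j (a, b) = (PX ^ (i : ℕ) * PZ ^ (j : ℕ)) b a * cc := by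
  fin_cases a <;> fin_cases b <;>
    simp [bell, bell00, cc, Matrix.mulVec, dotProduct, Fintype.sum_prod_type,
      Fin.sum_univ_two, Matrix.kroneckerMap_apply, Matrix.one_apply]

lemma M_real (i j : Fin 2) (a b : Fin 2) :
    (starRingEnd ℂ) ((PX ^ (i : ℕ) * PZ ^ (j : ℕ)) a b) = (PX ^ (i : ℕ) * PZ ^ (j : ℕ)) a b := by
  fin_cases i <;> fin_cases j <;> fin_cases a <;> fin_cases b <;>
    norm_num [PX, PZ, Matrix.mul_apply, Fin.sum_univ_two]

/-- w-vector of the factorized swapProj. -/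
def wvec (ψ u v : Fin 2 × Fin 2 → ℂ) : Fin 2 × Fin 2 → ℂ :=
  fun p => ∑ a₁, ∑ a₂, star (ψ (a₁, a₂)) * u (p.1, a₁) * v (a₂, p.2)

lemma swapProj_rankOne (ψ u v : Fin 2 × Fin 2 → ℂ) :
    swapProj ψ (vecMulVec u (star u) ⊗ₖ vecMulVec v (star v)) =
      vecMulVec (wvec ψ u v) (star (wvec ψ u v)) := by
  ext p q
  rw [show (vecMulVec (wvec ψ u v) (star (wvec ψ u v))) p q
      = star (wvec ψ u v q) * wvec ψ u v p from by
    rw [vecMulVec_apply, Pi.star_apply, mul_comm]]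
  simp only [swapProj, vecMulVec_apply, kroneckerMap_apply, Pi.star_apply, wvec,
    star_sum, star_mul', star_star, Finset.sum_mul, Finset.mul_sum]
  refine Finset.sum_congr rfl fun a1 _ => Finset.sum_congr rfl fun a2 _ =>
    Finset.sum_congr rfl fun a1' _ => Finset.sum_congr rfl fun a2' _ => ?_
  ring

lemma wvec_bell (m n i j k l : Fin 2) :
    wvec (bell m n) (bell i j) (bell k l) = fun p =>
      cc ^ 3 * ((PX ^ (k:ℕ) * PZ ^ (l:ℕ)) *
        ((PX ^ (m:ℕ) * PZ ^ (n:ℕ)) * (PX ^ (i:ℕ) * PZ ^ (j:ℕ)))) p.2 p.1 := by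
  funext p
  simp only [wvec, bell_apply, star_mul', RCLike.star_def, M_real, cc_real]
  simp only [Matrix.mul_apply, Fin.sum_univ_two]
  ring

lemma conj_rankOne {N : Type*} [Fintype N] (A : Matrix N N ℂ) (x : N → ℂ) :
    A * vecMulVec x (star x) * Aᴴ = vecMulVec (A.mulVec x) (star (A.mulVec x)) := by
  ext p q
  rw [show (vecMulVec (A.mulVec x) (star (A.mulVec x))) p q
      = star (A.mulVec x q) * A.mulVec x p from by
    rw [vecMulVec_apply, Pi.star_apply, mul_comm]]
  simp only [Matrix.mul_apply, vecMulVec_apply, Pi.star_apply, Matrix.mulVec,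
    dotProduct, conjTranspose_apply, star_sum, star_mul', star_star,
    Finset.sum_mul, Finset.mul_sum]
  rw [Finset.sum_comm]
  refine Finset.sum_congr rfl fun s _ => Finset.sum_congr rfl fun r _ => ?_
  ring

lemma U_mulVec (V K : Matrix (Fin 2) (Fin 2) ℂ) (z : ℂ) :
    ((1 : Matrix (Fin 2) (Fin 2) ℂ) ⊗ₖ V).mulVec (fun p => z * K p.2 p.1) =
      fun p => z * (V * K) p.2 p.1 := by
  funext p
  obtain ⟨p1, p2⟩ := p
  fin_cases p1 <;> fin_cases p2 <;>
    simp [Matrix.mulVec, dotProduct, Fintype.sum_prod_type, Fin.sum_univ_two,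
      Matrix.kroneckerMap_apply, Matrix.one_apply, Matrix.mul_apply] <;> ring

set_option maxHeartbeats 1000000 in
lemma pauli_conj (m n i j k l : Fin 2) : ∃ e : ℝ, (e = 1 ∨ e = -1) ∧
    (PZ ^ (n:ℕ) * PX ^ (m:ℕ)) * ((PX ^ (k:ℕ) * PZ ^ (l:ℕ)) *
        ((PX ^ (m:ℕ) * PZ ^ (n:ℕ)) * (PX ^ (i:ℕ) * PZ ^ (j:ℕ))))
      = ((e : ℝ) : ℂ) • (PX ^ (((i + k : Fin 2)) : ℕ) * PZ ^ (((j + l : Fin 2)) : ℕ)) := by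
  refine ⟨(-1 : ℝ) ^ ((l:ℕ) * (m:ℕ) + (n:ℕ) * (k:ℕ) + (l:ℕ) * (i:ℕ)), ?_, ?_⟩
  · rcases Nat.even_or_odd ((l:ℕ) * (m:ℕ) + (n:ℕ) * (k:ℕ) + (l:ℕ) * (i:ℕ)) with h | h
    · exact Or.inl (Even.neg_one_pow h)
    · exact Or.inr (Odd.neg_one_pow h)
  · fin_cases m <;> fin_cases n <;> fin_cases i <;> fin_cases j <;> fin_cases k <;> fin_cases l <;>
    · simp only [Fin.mk_zero, Fin.mk_one, Fin.isValue,
        show (1 + 1 : Fin 2) = 0 from rfl, show (0 + 1 : Fin 2) = 1 from rfl,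
        show (1 + 0 : Fin 2) = 1 from rfl, show (0 + 0 : Fin 2) = 0 from rfl,
        show ((0 : Fin 2) : ℕ) = 0 from rfl, show ((1 : Fin 2) : ℕ) = 1 from rfl,
        pow_zero, pow_one, Matrix.one_mul, Matrix.mul_one]
      ext a b
      fin_cases a <;> fin_cases b <;>
        norm_num [PX, PZ, Matrix.mul_apply, Fin.sum_univ_two, Matrix.one_apply]

lemma vecMulVec_smul_star (z : ℂ) (x : Fin 2 × Fin 2 → ℂ) :
    vecMulVec (z • x) (star (z • x)) = (z * star z) • vecMulVec x (star x) := by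
  ext p q
  simp only [vecMulVec_apply, Pi.smul_apply, Pi.star_apply, smul_eq_mul, star_mul',
    Matrix.smul_apply]
  ring

/-- Key computation: corrected post-measurement term. -/
lemma key (m n i j k l : Fin 2) :
    ((1 : Matrix (Fin 2) (Fin 2) ℂ) ⊗ₖ (PZ ^ (n:ℕ) * PX ^ (m:ℕ))) *
        swapProj (bell m n) (bproj i j ⊗ₖ bproj k l) *
        ((1 : Matrix (Fin 2) (Fin 2) ℂ) ⊗ₖ (PZ ^ (n:ℕ) * PX ^ (m:ℕ)))ᴴ
      = (1/4 : ℂ) • bproj (i + k) (j + l) := by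
  obtain ⟨e, he, hmat⟩ := pauli_conj m n i j k l
  rw [show bproj i j ⊗ₖ bproj k l
      = vecMulVec (bell i j) (star (bell i j)) ⊗ₖ vecMulVec (bell k l) (star (bell k l)) from rfl]
  rw [swapProj_rankOne, conj_rankOne, wvec_bell, U_mulVec]
  have hv : (fun p : Fin 2 × Fin 2 => cc ^ 3 *
      ((PZ ^ (n:ℕ) * PX ^ (m:ℕ)) * ((PX ^ (k:ℕ) * PZ ^ (l:ℕ)) *
        ((PX ^ (m:ℕ) * PZ ^ (n:ℕ)) * (PX ^ (i:ℕ) * PZ ^ (j:ℕ))))) p.2 p.1)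
      = (((e:ℝ):ℂ) * cc ^ 2) • bell (i + k) (j + l) := by
    funext p
    rw [hmat]
    obtain ⟨p1, p2⟩ := p
    simp only [Matrix.smul_apply, smul_eq_mul, Pi.smul_apply, bell_apply]
    ring
  rw [hv, vecMulVec_smul_star]
  have hcoef : (((e:ℝ):ℂ) * cc ^ 2) * star (((e:ℝ):ℂ) * cc ^ 2) = 1/4 := by
    rw [star_mul', RCLike.star_def, map_pow, cc_real, Complex.conj_ofReal]
    rcases he with h | h <;> rw [h] <;> push_cast <;>
      linear_combination (cc ^ 2 + 1/2) * cc_sq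
  rw [hcoef]
  rfl

lemma kron_conjTranspose (A B : Matrix (Fin 2) (Fin 2) ℂ) : (A ⊗ₖ B)ᴴ = Aᴴ ⊗ₖ Bᴴ := by
  ext p q
  simp only [conjTranspose_apply, kroneckerMap_apply, star_mul']
  all_goals ring

lemma V_unitary (m n : Fin 2) :
    (PZ ^ (n:ℕ) * PX ^ (m:ℕ))ᴴ * (PZ ^ (n:ℕ) * PX ^ (m:ℕ)) = 1 := by
  fin_cases m <;> fin_cases n <;>
  · ext a b
    fin_cases a <;> fin_cases b <;>
      norm_num [PX, PZ, Matrix.mul_apply, Fin.sum_univ_two, Matrix.one_apply,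
        Matrix.conjTranspose_apply,
        show ((0 : Fin 2) : ℕ) = 0 from rfl, show ((1 : Fin 2) : ℕ) = 1 from rfl]

lemma U_unitary (m n : Fin 2) :
    ((1 : Matrix (Fin 2) (Fin 2) ℂ) ⊗ₖ (PZ ^ (n:ℕ) * PX ^ (m:ℕ)))ᴴ *
      ((1 : Matrix (Fin 2) (Fin 2) ℂ) ⊗ₖ (PZ ^ (n:ℕ) * PX ^ (m:ℕ))) = 1 := by
  rw [kron_conjTranspose, ← Matrix.mul_kronecker_mul, conjTranspose_one, one_mul, V_unitary,
    Matrix.one_kronecker_one]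

lemma trace_bproj (i j : Fin 2) : (bproj i j).trace = 1 := by
  fin_cases i <;> fin_cases j <;>
  · simp only [bproj, Matrix.trace, Matrix.diag, vecMulVec_apply, Pi.star_apply,
      Fintype.sum_prod_type, Fin.sum_univ_two, bell_apply, RCLike.star_def, _root_.map_mul,
      M_real, cc_real]
    norm_num [PX, PZ, Matrix.mul_apply, Fin.sum_univ_two, _root_.map_mul, cc_real,
      show ((0 : Fin 2) : ℕ) = 0 from rfl, show ((1 : Fin 2) : ℕ) = 1 from rfl]
    first
    | linear_combination 2 * cc_sq
    | linear_combination 2 * cc_sq + 2 * cc * cc_real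
    | linear_combination 2 * cc_sq - 2 * cc * cc_real
    | linear_combination 2 * cc_sq + 4 * cc * cc_real

lemma swapProj_zero (ψ : Fin 2 × Fin 2 → ℂ) : swapProj ψ 0 = 0 := by
  ext p q; simp [swapProj]

lemma swapProj_add (ψ : Fin 2 × Fin 2 → ℂ) (M N) :
    swapProj ψ (M + N) = swapProj ψ M + swapProj ψ N := by
  ext p q
  simp [swapProj, Matrix.add_apply, mul_add, add_mul, Finset.sum_add_distrib]

lemma swapProj_smul (ψ : Fin 2 × Fin 2 → ℂ) (z : ℂ) (M) :
    swapProj ψ (z • M) = z • swapProj ψ M := by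
  ext p q
  simp only [swapProj, Matrix.smul_apply, smul_eq_mul, Finset.mul_sum]
  refine Finset.sum_congr rfl fun a1 _ => Finset.sum_congr rfl fun a2 _ =>
    Finset.sum_congr rfl fun a1' _ => Finset.sum_congr rfl fun a2' _ => ?_
  ring

lemma swapProj_sum {ι : Type*} (s : Finset ι) (ψ : Fin 2 × Fin 2 → ℂ)
    (f : ι → Matrix ((Fin 2 × Fin 2) × (Fin 2 × Fin 2)) ((Fin 2 × Fin 2) × (Fin 2 × Fin 2)) ℂ) :
    swapProj ψ (∑ x ∈ s, f x) = ∑ x ∈ s, swapProj ψ (f x) := by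
  induction s using Finset.cons_induction with
  | empty => simp [swapProj_zero]
  | cons a s ha ih => rw [Finset.sum_cons, Finset.sum_cons, swapProj_add, ih]

lemma sum_kron {ι : Type*} (s : Finset ι)
    (f : ι → Matrix (Fin 2 × Fin 2) (Fin 2 × Fin 2) ℂ) (B : Matrix (Fin 2 × Fin 2) (Fin 2 × Fin 2) ℂ) :
    (∑ x ∈ s, f x) ⊗ₖ B = ∑ x ∈ s, (f x ⊗ₖ B) := by
  ext p q
  simp [kroneckerMap_apply, Matrix.sum_apply, Finset.sum_mul]

lemma kron_sum {ι : Type*} (s : Finset ι) (A : Matrix (Fin 2 × Fin 2) (Fin 2 × Fin 2) ℂ)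
    (f : ι → Matrix (Fin 2 × Fin 2) (Fin 2 × Fin 2) ℂ) :
    A ⊗ₖ (∑ x ∈ s, f x) = ∑ x ∈ s, (A ⊗ₖ f x) := by
  ext p q
  simp [kroneckerMap_apply, Matrix.sum_apply, Finset.mul_sum]

lemma trace_term (m n i j k l : Fin 2) :
    (swapProj (bell m n) (bproj i j ⊗ₖ bproj k l)).trace = 1/4 := by
  set U := ((1 : Matrix (Fin 2) (Fin 2) ℂ) ⊗ₖ (PZ ^ (n:ℕ) * PX ^ (m:ℕ))) with hUdef
  set S := swapProj (bell m n) (bproj i j ⊗ₖ bproj k l) with hSdef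
  have h1 : (U * S * Uᴴ).trace = S.trace := by
    rw [Matrix.trace_mul_cycle, U_unitary, Matrix.one_mul]
  rw [← h1, key, Matrix.trace_smul, trace_bproj, smul_eq_mul, mul_one]

set_option maxHeartbeats 1000000 in
/-- Entanglement swapping of Bell-diagonal states: each BSM outcome (m,n)
occurs with probability 1/4, and the corrected post-measurement state is Bell-diagonal with
coefficients λ'_{ab} = ∑_{i⊕k=a, j⊕l=b} λ_ij μ_kl, independently of (m,n). -/
theorem swap_bell_diagonal (lam mu : Fin 2 → Fin 2 → ℝ)
    (hlam : (∀ i j, 0 ≤ lam i j) ∧ ∑ i : Fin 2, ∑ j : Fin 2, lam i j = 1)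
    (hmu : (∀ i j, 0 ≤ mu i j) ∧ ∑ i : Fin 2, ∑ j : Fin 2, mu i j = 1)
    (ρ₁ ρ₂ : Matrix (Fin 2 × Fin 2) (Fin 2 × Fin 2) ℂ)
    (hρ₁ : ρ₁ = ∑ i : Fin 2, ∑ j : Fin 2, (lam i j : ℂ) • bproj i j)
    (hρ₂ : ρ₂ = ∑ k : Fin 2, ∑ l : Fin 2, (mu k l : ℂ) • bproj k l)
    (m n : Fin 2) :
    swapProb m n (ρ₁ ⊗ₖ ρ₂) = 1 / 4 ∧
    (4 : ℂ) • (((1 : Matrix (Fin 2) (Fin 2) ℂ) ⊗ₖ (PZ ^ (n : ℕ) * PX ^ (m : ℕ))) *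
        swapProj (bell m n) (ρ₁ ⊗ₖ ρ₂) *
        ((1 : Matrix (Fin 2) (Fin 2) ℂ) ⊗ₖ (PZ ^ (n : ℕ) * PX ^ (m : ℕ)))ᴴ) =
      ∑ a : Fin 2, ∑ b : Fin 2,
        ((∑ i : Fin 2, ∑ j : Fin 2, lam i j * mu (a + i) (b + j) : ℝ) : ℂ) • bproj a b := by
  obtain ⟨-, hlam2⟩ := hlam
  obtain ⟨-, hmu2⟩ := hmu
  subst hρ₁ hρ₂
  have hexp : (∑ i : Fin 2, ∑ j : Fin 2, (lam i j : ℂ) • bproj i j) ⊗ₖ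
      (∑ k : Fin 2, ∑ l : Fin 2, (mu k l : ℂ) • bproj k l)
      = ∑ i : Fin 2, ∑ j : Fin 2, ∑ k : Fin 2, ∑ l : Fin 2,
          ((lam i j : ℂ) * (mu k l : ℂ)) • (bproj i j ⊗ₖ bproj k l) := by
    ext p q
    simp only [kroneckerMap_apply, Matrix.sum_apply, Matrix.add_apply, Matrix.smul_apply,
      smul_eq_mul, Fin.sum_univ_two]
    ring
  have hl : ((lam 0 0 : ℂ) + lam 0 1 + (lam 1 0 + lam 1 1)) = 1 := by
    have : (lam 0 0 + lam 0 1 + (lam 1 0 + lam 1 1) : ℝ) = 1 := by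
      simpa [Fin.sum_univ_two] using hlam2
    exact_mod_cast this
  have hm : ((mu 0 0 : ℂ) + mu 0 1 + (mu 1 0 + mu 1 1)) = 1 := by
    have : (mu 0 0 + mu 0 1 + (mu 1 0 + mu 1 1) : ℝ) = 1 := by
      simpa [Fin.sum_univ_two] using hmu2
    exact_mod_cast this
  constructor
  · unfold swapProb
    rw [hexp]
    simp only [swapProj_sum, swapProj_smul, Matrix.trace_sum, Matrix.trace_smul, trace_term,
      smul_eq_mul]
    simp only [Fin.sum_univ_two]
    linear_combination (1/4 : ℂ) * ((mu 0 0 : ℂ) + mu 0 1 + (mu 1 0 + mu 1 1)) * hl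
      + (1/4 : ℂ) * hm
  · rw [hexp]
    simp only [swapProj_sum, swapProj_smul, Matrix.mul_sum, Matrix.sum_mul,
      mul_smul_comm, smul_mul_assoc, key]
    simp only [Fin.sum_univ_two, smul_smul, Finset.smul_sum,
      show (1 + 1 : Fin 2) = 0 from rfl, show (0 + 1 : Fin 2) = 1 from rfl,
      show (1 + 0 : Fin 2) = 1 from rfl, show (0 + 0 : Fin 2) = 0 from rfl]
    push_cast
    module
end
end

section
/- Fidelity formula for swapping noisy states: let ρ_k = p|Ψ₀₀⟩⟨Ψ₀₀| + (1−p)σ_k (k=1,2) with fidelity F = ⟨Ψ₀₀|ρ_k|Ψ₀₀⟩. Then for each Bell measurement outcome ij, the postselected outcome probability is p'_ij = p/2 − p²/4 + (1−p)² p̃'_ij and the postselected fidelity is F'_ij = (2pF − p² + 4(1−p)² p̃'_ij F̃'_ij)/(2p − p² + 4(1−p)² p̃'_ij), where p̃'_ij and F̃'_ij are the corresponding swap probability and fidelity when swapping σ₁⊗σ₂. -/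
open Matrix Kronecker BigOperators ComplexOrder

noncomputable section

/-- The family S_{p,F}: two-qubit states of the form p|Ψ₀₀⟩⟨Ψ₀₀| + (1−p)σ for some density
matrix σ, with fidelity ⟨Ψ₀₀|ρ|Ψ₀₀⟩ = F. -/
def Spf (p F : ℝ) : Set (Matrix (Fin 2 × Fin 2) (Fin 2 × Fin 2) ℂ) :=
  {ρ | (∃ σ : Matrix (Fin 2 × Fin 2) (Fin 2 × Fin 2) ℂ, IsDensity σ ∧
      ρ = (p : ℂ) • bproj 0 0 + ((1 - p : ℝ) : ℂ) • σ) ∧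
    braket2 (bell 0 0) ρ (bell 0 0) = (F : ℂ)}

/-!
The swap statistics `swapProb` and `swapNum` are linear in the state, so expanding
`ρ₁ ⊗ ρ₂` bilinearly reduces everything to four product terms. Whenever one factor is the
Bell projector `|Ψ₀₀⟩⟨Ψ₀₀|`, the Bell measurement teleports the other factor `σ` to `B₁B₂`:
for outcome `ij` the postselected operator is `¼ T†σT`, where `T` applies `X^iZ^j` (or its
transpose) to one qubit. `T` is unitary and maps `|Ψ_ij⟩` back to `|Ψ₀₀⟩`, so such a term
contributes `tr σ / 4` to the probability and `⟨Ψ₀₀|σ|Ψ₀₀⟩ / 4` to the numerator, and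
`F = p + (1 - p)⟨Ψ₀₀|σ_k|Ψ₀₀⟩` turns the latter into the stated formula.

Writing `p̃' F̃'` for the numerator of `σ₁ ⊗ σ₂` is harmless when `p̃' = 0` (where division
returns `0`): the postselected operator of a positive state is positive, hence zero once its
trace vanishes, so the numerator vanishes too.
-/

lemma PX_mul_self : PX * PX = 1 := by
  ext a b; fin_cases a <;> fin_cases b <;> simp [PX]

lemma PZ_mul_self : PZ * PZ = 1 := by
  ext a b; fin_cases a <;> fin_cases b <;> simp [PZ]

lemma PX_transpose : PXᵀ = PX := by
  ext a b; fin_cases a <;> fin_cases b <;> simp [PX]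

lemma PZ_transpose : PZᵀ = PZ := by
  ext a b; fin_cases a <;> fin_cases b <;> simp [PZ]

lemma PX_conjTranspose : PXᴴ = PX := by
  ext a b; fin_cases a <;> fin_cases b <;> simp [PX]

lemma PZ_conjTranspose : PZᴴ = PZ := by
  ext a b; fin_cases a <;> fin_cases b <;> simp [PZ]

def pauliXZ (i j : Fin 2) : Matrix (Fin 2) (Fin 2) ℂ := PX ^ (i : ℕ) * PZ ^ (j : ℕ)

lemma pauliXZ_zero_zero : pauliXZ 0 0 = 1 := by simp [pauliXZ]

lemma pauliXZ_transpose (i j : Fin 2) : (pauliXZ i j)ᵀ = (pauliXZ i j)ᴴ := by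
  simp only [pauliXZ, transpose_mul, conjTranspose_mul, transpose_pow, conjTranspose_pow,
    PX_transpose, PZ_transpose, PX_conjTranspose, PZ_conjTranspose]

lemma pauliXZ_mem_unitary (i j : Fin 2) :
    pauliXZ i j ∈ unitary (Matrix (Fin 2) (Fin 2) ℂ) := by
  rw [mem_unitaryGroup_iff, star_eq_conjTranspose, pauliXZ, conjTranspose_mul,
    conjTranspose_pow, conjTranspose_pow, PX_conjTranspose, PZ_conjTranspose, mul_assoc,
    ← mul_assoc (PZ ^ _), pow_mul_pow_eq_one _ PZ_mul_self, one_mul,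
    pow_mul_pow_eq_one _ PX_mul_self]

lemma inv_sqrt_two_mul_self : (Real.sqrt 2 : ℂ)⁻¹ * (Real.sqrt 2 : ℂ)⁻¹ = 1 / 2 := by
  rw [← mul_inv, ← Complex.ofReal_mul, Real.mul_self_sqrt zero_le_two]
  norm_num

lemma star_inv_sqrt_two_mul_self : star (Real.sqrt 2 : ℂ)⁻¹ * (Real.sqrt 2 : ℂ)⁻¹ = 1 / 2 := by
  rw [star_inv₀, RCLike.star_def, Complex.conj_ofReal, inv_sqrt_two_mul_self]

lemma bell_eq_smul_vec (i j : Fin 2) : bell i j = (Real.sqrt 2 : ℂ)⁻¹ • vec (pauliXZ i j) := by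
  have h : bell00 = vec ((Real.sqrt 2 : ℂ)⁻¹ • 1) := by
    ext ⟨x, y⟩; by_cases hxy : x = y <;> simp [bell00, one_apply, hxy, eq_comm]
  rw [bell, h, ← vec_mul_eq_mulVec, mul_smul_comm, mul_one, vec_smul, pauliXZ]

lemma star_bell_zero_zero_dotProduct : star (bell 0 0) ⬝ᵥ bell 0 0 = 1 := by
  simp [bell_eq_smul_vec, pauliXZ_zero_zero, dotProduct, Fintype.sum_prod_type, one_apply,
    inv_sqrt_two_mul_self]

lemma bproj_zero_zero_apply (x y : Fin 2 × Fin 2) :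
    bproj 0 0 x y = if x.1 = x.2 ∧ y.1 = y.2 then 1 / 2 else 0 := by
  simp only [bproj, vecMulVec_apply, bell_eq_smul_vec, pauliXZ_zero_zero, Pi.smul_apply,
    Pi.star_apply, vec, one_apply, star_smul, star_inv₀, RCLike.star_def, Complex.conj_ofReal]
  split_ifs <;> simp_all [inv_sqrt_two_mul_self]

lemma trace_bproj_zero_zero : (bproj 0 0).trace = 1 := by
  rw [bproj, trace_vecMulVec, dotProduct_comm, star_bell_zero_zero_dotProduct]

lemma braket2_bell_bproj_zero_zero : braket2 (bell 0 0) (bproj 0 0) (bell 0 0) = 1 := by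
  rw [braket2, bproj, vecMulVec_mulVec, star_bell_zero_zero_dotProduct, MulOpposite.op_one,
    one_smul, star_bell_zero_zero_dotProduct]

lemma braket2_add {n : Type*} [Fintype n] (φ ψ : n → ℂ) (M N : Matrix n n ℂ) :
    braket2 φ (M + N) ψ = braket2 φ M ψ + braket2 φ N ψ := by
  rw [braket2, braket2, braket2, add_mulVec, dotProduct_add]

lemma braket2_smul {n : Type*} [Fintype n] (φ ψ : n → ℂ) (c : ℂ) (M : Matrix n n ℂ) :
    braket2 φ (c • M) ψ = c * braket2 φ M ψ := by
  rw [braket2, braket2, smul_mulVec, dotProduct_smul, smul_eq_mul]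

lemma braket2_conjTranspose_mul_mul {n : Type*} [Fintype n] (φ ψ : n → ℂ)
    (T M : Matrix n n ℂ) : braket2 φ (Tᴴ * M * T) ψ = braket2 (T *ᵥ φ) M (T *ᵥ ψ) := by
  rw [braket2, braket2, ← mulVec_mulVec, ← mulVec_mulVec, dotProduct_mulVec, star_mulVec]

lemma braket2_bell_mixture (a b : ℂ) (σ : Matrix (Fin 2 × Fin 2) (Fin 2 × Fin 2) ℂ) :
    braket2 (bell 0 0) (a • bproj 0 0 + b • σ) (bell 0 0) =
      a + b * braket2 (bell 0 0) σ (bell 0 0) := by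
  rw [braket2_add, braket2_smul, braket2_smul, braket2_bell_bproj_zero_zero, mul_one]

lemma trace_conjTranspose_mul_mul_of_mem_unitary {n R : Type*} [Fintype n] [DecidableEq n]
    [CommRing R] [StarRing R] {T : Matrix n n R} (hT : T ∈ unitary (Matrix n n R))
    (M : Matrix n n R) : (Tᴴ * M * T).trace = M.trace := by
  rw [trace_mul_cycle, ← star_eq_conjTranspose, Unitary.mul_star_self_of_mem hT, one_mul]

/-- The operator `I_{B₁} ⊗ |ψ⟩_{A₁A₂} ⊗ I_{B₂}` from `B₁B₂` into `(B₁A₁)(A₂B₂)`. -/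
def middleKet (ψ : Fin 2 × Fin 2 → ℂ) :
    Matrix ((Fin 2 × Fin 2) × (Fin 2 × Fin 2)) (Fin 2 × Fin 2) ℂ :=
  fun r b => if r.1.1 = b.1 ∧ r.2.2 = b.2 then ψ (r.1.2, r.2.1) else 0

lemma middleKet_smul (c : ℂ) (ψ : Fin 2 × Fin 2 → ℂ) :
    middleKet (c • ψ) = c • middleKet ψ := by
  ext r b; simp [middleKet]

lemma swapProj_eq_conjTranspose_mul_mul (ψ : Fin 2 × Fin 2 → ℂ)
    (M : Matrix ((Fin 2 × Fin 2) × (Fin 2 × Fin 2)) ((Fin 2 × Fin 2) × (Fin 2 × Fin 2)) ℂ) :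
    swapProj ψ M = (middleKet ψ)ᴴ * M * middleKet ψ := by
  ext ⟨b₁, b₂⟩ ⟨b₁', b₂'⟩
  simp only [swapProj, middleKet, mul_apply, conjTranspose_apply, Fintype.sum_prod_type,
    Fin.sum_univ_two, ite_and, RCLike.star_def, apply_ite (starRingEnd ℂ), map_zero, ite_mul,
    mul_ite, zero_mul, mul_zero, Finset.sum_ite_irrel, Finset.sum_ite_eq', Finset.mem_univ,
    if_true, Finset.sum_const_zero]
  ring

lemma swapProj_smul_left (c : ℂ) (ψ : Fin 2 × Fin 2 → ℂ)
    (M : Matrix ((Fin 2 × Fin 2) × (Fin 2 × Fin 2)) ((Fin 2 × Fin 2) × (Fin 2 × Fin 2)) ℂ) :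
    swapProj (c • ψ) M = (star c * c) • swapProj ψ M := by
  rw [swapProj_eq_conjTranspose_mul_mul, swapProj_eq_conjTranspose_mul_mul, middleKet_smul,
    conjTranspose_smul, Matrix.smul_mul, Matrix.mul_smul, Matrix.smul_mul, smul_smul, mul_comm]

lemma swapProb_add (i j : Fin 2)
    (M N : Matrix ((Fin 2 × Fin 2) × (Fin 2 × Fin 2)) ((Fin 2 × Fin 2) × (Fin 2 × Fin 2)) ℂ) :
    swapProb i j (M + N) = swapProb i j M + swapProb i j N := by
  simp only [swapProb, swapProj_eq_conjTranspose_mul_mul, Matrix.mul_add, Matrix.add_mul,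
    trace_add]

lemma swapProb_smul (i j : Fin 2) (c : ℂ)
    (M : Matrix ((Fin 2 × Fin 2) × (Fin 2 × Fin 2)) ((Fin 2 × Fin 2) × (Fin 2 × Fin 2)) ℂ) :
    swapProb i j (c • M) = c * swapProb i j M := by
  simp only [swapProb, swapProj_eq_conjTranspose_mul_mul, Matrix.mul_smul, Matrix.smul_mul,
    trace_smul, smul_eq_mul]

lemma swapNum_add (i j : Fin 2)
    (M N : Matrix ((Fin 2 × Fin 2) × (Fin 2 × Fin 2)) ((Fin 2 × Fin 2) × (Fin 2 × Fin 2)) ℂ) :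
    swapNum i j (M + N) = swapNum i j M + swapNum i j N := by
  simp only [swapNum, swapProj_eq_conjTranspose_mul_mul, Matrix.mul_add, Matrix.add_mul,
    braket2_add]

lemma swapNum_smul (i j : Fin 2) (c : ℂ)
    (M : Matrix ((Fin 2 × Fin 2) × (Fin 2 × Fin 2)) ((Fin 2 × Fin 2) × (Fin 2 × Fin 2)) ℂ) :
    swapNum i j (c • M) = c * swapNum i j M := by
  simp only [swapNum, swapProj_eq_conjTranspose_mul_mul, Matrix.mul_smul, Matrix.smul_mul,
    braket2_smul]

lemma swapNum_eq_zero_of_swapProb_eq_zero {i j : Fin 2}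
    {M : Matrix ((Fin 2 × Fin 2) × (Fin 2 × Fin 2)) ((Fin 2 × Fin 2) × (Fin 2 × Fin 2)) ℂ}
    (hM : M.PosSemidef) (h : swapProb i j M = 0) : swapNum i j M = 0 := by
  have hpsd : (swapProj (bell i j) M).PosSemidef := by
    rw [swapProj_eq_conjTranspose_mul_mul]
    exact hM.conjTranspose_mul_mul_same _
  rw [swapNum, hpsd.trace_eq_zero_iff.mp h, braket2, zero_mulVec, dotProduct_zero]

lemma swapProj_vec_bproj_kron (X : Matrix (Fin 2) (Fin 2) ℂ)
    (σ : Matrix (Fin 2 × Fin 2) (Fin 2 × Fin 2) ℂ) :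
    swapProj (vec X) (bproj 0 0 ⊗ₖ σ) = (1 / 2 : ℂ) • ((X ⊗ₖ 1)ᴴ * σ * (X ⊗ₖ 1)) := by
  ext ⟨b₁, b₂⟩ ⟨b₁', b₂'⟩
  simp only [swapProj, vec, bproj_zero_zero_apply, kroneckerMap_apply, Matrix.smul_apply,
    mul_apply, conjTranspose_apply, one_apply, Fintype.sum_prod_type, Fin.sum_univ_two, ite_and,
    RCLike.star_def, apply_ite (starRingEnd ℂ), map_zero, ite_mul, mul_ite, zero_mul, mul_zero,
    mul_one, Finset.sum_ite_irrel, Finset.sum_ite_eq, Finset.sum_ite_eq', Finset.mem_univ,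
    if_true, Finset.sum_const_zero, smul_eq_mul]
  ring

lemma swapProj_vec_kron_bproj (X : Matrix (Fin 2) (Fin 2) ℂ)
    (σ : Matrix (Fin 2 × Fin 2) (Fin 2 × Fin 2) ℂ) :
    swapProj (vec X) (σ ⊗ₖ bproj 0 0) = (1 / 2 : ℂ) • ((1 ⊗ₖ Xᵀ)ᴴ * σ * (1 ⊗ₖ Xᵀ)) := by
  ext ⟨b₁, b₂⟩ ⟨b₁', b₂'⟩
  simp only [swapProj, vec, bproj_zero_zero_apply, kroneckerMap_apply, Matrix.smul_apply,
    mul_apply, conjTranspose_apply, transpose_apply, one_apply, Fintype.sum_prod_type,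
    Fin.sum_univ_two, ite_and, RCLike.star_def, apply_ite (starRingEnd ℂ), map_zero, ite_mul,
    mul_ite, zero_mul, mul_zero, one_mul, Finset.sum_ite_irrel, Finset.sum_ite_eq',
    Finset.mem_univ, if_true, Finset.sum_const_zero, smul_eq_mul]
  ring

lemma swapProj_bell_bproj_kron (i j : Fin 2) (σ : Matrix (Fin 2 × Fin 2) (Fin 2 × Fin 2) ℂ) :
    swapProj (bell i j) (bproj 0 0 ⊗ₖ σ) =
      (1 / 4 : ℂ) • ((pauliXZ i j ⊗ₖ 1)ᴴ * σ * (pauliXZ i j ⊗ₖ 1)) := by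
  rw [bell_eq_smul_vec, swapProj_smul_left, swapProj_vec_bproj_kron, smul_smul,
    star_inv_sqrt_two_mul_self]
  norm_num

lemma swapProj_bell_kron_bproj (i j : Fin 2) (σ : Matrix (Fin 2 × Fin 2) (Fin 2 × Fin 2) ℂ) :
    swapProj (bell i j) (σ ⊗ₖ bproj 0 0) =
      (1 / 4 : ℂ) • ((1 ⊗ₖ (pauliXZ i j)ᵀ)ᴴ * σ * (1 ⊗ₖ (pauliXZ i j)ᵀ)) := by
  rw [bell_eq_smul_vec, swapProj_smul_left, swapProj_vec_kron_bproj, smul_smul,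
    star_inv_sqrt_two_mul_self]
  norm_num

lemma pauliXZ_kronecker_one_mulVec_bell (i j : Fin 2) :
    (pauliXZ i j ⊗ₖ 1) *ᵥ bell i j = bell 0 0 := by
  rw [bell_eq_smul_vec, bell_eq_smul_vec, mulVec_smul, kronecker_mulVec_vec, one_mul,
    pauliXZ_transpose, ← star_eq_conjTranspose,
    Unitary.mul_star_self_of_mem (pauliXZ_mem_unitary i j), pauliXZ_zero_zero]

lemma one_kronecker_transpose_pauliXZ_mulVec_bell (i j : Fin 2) :
    (1 ⊗ₖ (pauliXZ i j)ᵀ) *ᵥ bell i j = bell 0 0 := by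
  rw [bell_eq_smul_vec, bell_eq_smul_vec, mulVec_smul, kronecker_mulVec_vec, transpose_one,
    mul_one, pauliXZ_transpose, ← star_eq_conjTranspose,
    Unitary.star_mul_self_of_mem (pauliXZ_mem_unitary i j), pauliXZ_zero_zero]

lemma swapProb_bproj_kron (i j : Fin 2) (σ : Matrix (Fin 2 × Fin 2) (Fin 2 × Fin 2) ℂ) :
    swapProb i j (bproj 0 0 ⊗ₖ σ) = σ.trace / 4 := by
  rw [swapProb, swapProj_bell_bproj_kron, trace_smul, trace_conjTranspose_mul_mul_of_mem_unitary
    (kronecker_mem_unitary (pauliXZ_mem_unitary i j) (one_mem _)), smul_eq_mul]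
  ring

lemma swapProb_kron_bproj (i j : Fin 2) (σ : Matrix (Fin 2 × Fin 2) (Fin 2 × Fin 2) ℂ) :
    swapProb i j (σ ⊗ₖ bproj 0 0) = σ.trace / 4 := by
  have hT : (pauliXZ i j)ᵀ ∈ unitary (Matrix (Fin 2) (Fin 2) ℂ) := by
    rw [pauliXZ_transpose, ← star_eq_conjTranspose]
    exact Unitary.star_mem (pauliXZ_mem_unitary i j)
  rw [swapProb, swapProj_bell_kron_bproj, trace_smul, trace_conjTranspose_mul_mul_of_mem_unitary
    (kronecker_mem_unitary (one_mem _) hT), smul_eq_mul]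
  ring

lemma swapNum_bproj_kron (i j : Fin 2) (σ : Matrix (Fin 2 × Fin 2) (Fin 2 × Fin 2) ℂ) :
    swapNum i j (bproj 0 0 ⊗ₖ σ) = braket2 (bell 0 0) σ (bell 0 0) / 4 := by
  rw [swapNum, swapProj_bell_bproj_kron, braket2_smul, braket2_conjTranspose_mul_mul,
    pauliXZ_kronecker_one_mulVec_bell]
  ring

lemma swapNum_kron_bproj (i j : Fin 2) (σ : Matrix (Fin 2 × Fin 2) (Fin 2 × Fin 2) ℂ) :
    swapNum i j (σ ⊗ₖ bproj 0 0) = braket2 (bell 0 0) σ (bell 0 0) / 4 := by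
  rw [swapNum, swapProj_bell_kron_bproj, braket2_smul, braket2_conjTranspose_mul_mul,
    one_kronecker_transpose_pauliXZ_mulVec_bell]
  ring

lemma swapProb_kron_mixture (i j : Fin 2) (a b : ℂ)
    (σ₁ σ₂ : Matrix (Fin 2 × Fin 2) (Fin 2 × Fin 2) ℂ) :
    swapProb i j ((a • bproj 0 0 + b • σ₁) ⊗ₖ (a • bproj 0 0 + b • σ₂)) =
      a ^ 2 / 4 + a * b * (σ₁.trace + σ₂.trace) / 4 + b ^ 2 * swapProb i j (σ₁ ⊗ₖ σ₂) := by
  simp only [add_kronecker, kronecker_add, smul_kronecker, kronecker_smul, swapProb_add,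
    swapProb_smul, swapProb_bproj_kron, swapProb_kron_bproj, trace_bproj_zero_zero]
  ring

lemma swapNum_kron_mixture (i j : Fin 2) (a b : ℂ)
    (σ₁ σ₂ : Matrix (Fin 2 × Fin 2) (Fin 2 × Fin 2) ℂ) :
    swapNum i j ((a • bproj 0 0 + b • σ₁) ⊗ₖ (a • bproj 0 0 + b • σ₂)) =
      a ^ 2 / 4
        + a * b * (braket2 (bell 0 0) σ₁ (bell 0 0) + braket2 (bell 0 0) σ₂ (bell 0 0)) / 4
        + b ^ 2 * swapNum i j (σ₁ ⊗ₖ σ₂) := by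
  simp only [add_kronecker, kronecker_add, smul_kronecker, kronecker_smul, swapNum_add,
    swapNum_smul, swapNum_bproj_kron, swapNum_kron_bproj, braket2_bell_bproj_zero_zero]
  ring

/-- Fidelity formula for swapping noisy states
ρ_k = p|Ψ₀₀⟩⟨Ψ₀₀| + (1−p)σ_k of fidelity F: for each Bell outcome ij,
p'_ij = p/2 − p²/4 + (1−p)² p̃'_ij and
F'_ij = (2pF − p² + 4(1−p)² p̃'_ij F̃'_ij) / (2p − p² + 4(1−p)² p̃'_ij),
where p̃'_ij, F̃'_ij are the swap statistics of σ₁ ⊗ σ₂. -/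
theorem swap_noisy_states_formula (p F : ℝ) (i j : Fin 2)
    (σ₁ σ₂ : Matrix (Fin 2 × Fin 2) (Fin 2 × Fin 2) ℂ)
    (hσ₁ : IsDensity σ₁) (hσ₂ : IsDensity σ₂)
    (ρ₁ ρ₂ : Matrix (Fin 2 × Fin 2) (Fin 2 × Fin 2) ℂ)
    (hρ₁ : ρ₁ = (p : ℂ) • bproj 0 0 + ((1 - p : ℝ) : ℂ) • σ₁)
    (hρ₂ : ρ₂ = (p : ℂ) • bproj 0 0 + ((1 - p : ℝ) : ℂ) • σ₂)
    (hF₁ : braket2 (bell 0 0) ρ₁ (bell 0 0) = (F : ℂ))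
    (hF₂ : braket2 (bell 0 0) ρ₂ (bell 0 0) = (F : ℂ)) :
    swapProb i j (ρ₁ ⊗ₖ ρ₂) =
      (p : ℂ) / 2 - (p : ℂ) ^ 2 / 4 + ((1 : ℂ) - p) ^ 2 * swapProb i j (σ₁ ⊗ₖ σ₂) ∧
    swapFid i j (ρ₁ ⊗ₖ ρ₂) =
      (2 * (p : ℂ) * (F : ℂ) - (p : ℂ) ^ 2 +
          4 * ((1 : ℂ) - p) ^ 2 * swapProb i j (σ₁ ⊗ₖ σ₂) * swapFid i j (σ₁ ⊗ₖ σ₂)) /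
        (2 * (p : ℂ) - (p : ℂ) ^ 2 + 4 * ((1 : ℂ) - p) ^ 2 * swapProb i j (σ₁ ⊗ₖ σ₂)) := by
  rw [Complex.ofReal_sub, Complex.ofReal_one] at hρ₁ hρ₂
  subst hρ₁ hρ₂
  rw [braket2_bell_mixture] at hF₁ hF₂
  have hprob := swapProb_kron_mixture i j p (1 - p) σ₁ σ₂
  rw [hσ₁.2, hσ₂.2] at hprob
  have hnum := swapNum_kron_mixture i j p (1 - p) σ₁ σ₂
  have hcancel : swapProb i j (σ₁ ⊗ₖ σ₂) * swapFid i j (σ₁ ⊗ₖ σ₂) = swapNum i j (σ₁ ⊗ₖ σ₂) := by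
    rcases eq_or_ne (swapProb i j (σ₁ ⊗ₖ σ₂)) 0 with h | h
    · rw [h, zero_mul, swapNum_eq_zero_of_swapProb_eq_zero (hσ₁.1.kronecker hσ₂.1) h]
    · exact mul_div_cancel₀ _ h
  refine ⟨by rw [hprob]; ring, ?_⟩
  rw [mul_assoc _ (swapProb _ _ _), hcancel, swapFid, hnum, hprob,
    ← mul_div_mul_left _ _ (four_ne_zero (α := ℂ))]
  congr 1
  · linear_combination (p : ℂ) * hF₁ + (p : ℂ) * hF₂
  · ring
end
end
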